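/- Consider the Lie algebra L_{9,28}^{p,q} (pq ≠ 0) with nonzero brackets [X_1,X_2]=2X_2, [X_1,X_3]=−2X_3, [X_2,X_3]=X_1, [X_1,X_4]=X_4, [X_1,X_5]=−X_5, [X_2,X_5]=X_4, [X_3,X_4]=X_5, [X_4,X_8]=pX_4, [X_4,X_9]=qX_4, [X_5,X_8]=pX_5, [X_5,X_9]=qX_5, [X_6,X_8]=X_6, [X_7,X_9]=X_7. On the open region where x_6 > 0, x_7 > 0, and J_1 := −x_2 x_5² − x_1 x_4 x_5 + x_3 x_4² > 0, the function I_1 = J_1 / (x_6^{2p} x_7^{2q}) satisfies \hat{X}_i(I_1) = 0 for all i = 1,...,9. -/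

import Mathlib

/-!
Both the numerator `J₁` and the denominator `x₆^{2p} x₇^{2q}` of `I₁` are relative invariants
with the same multiplier: `X̂ᵢ` maps each of them to `χᵢ` times itself, where `χ` vanishes on
`sa(2,ℝ) = ⟨X₁, …, X₅⟩` and on `X₆, X₇`, and `χ(X₈) = -2p`, `χ(X₉) = -2q` (`J₁` is quadratic in
`x₄, x₅` and the `sa(2,ℝ)` invariant, the denominator is a monomial in `x₆, x₇`). By the quotient
rule, a quotient of two relative invariants with the same multiplier is an absolute invariant.
In the code indices start at `0`: `x 5` is `x₆` and `multiplier p q 7` is `χ(X₈)`.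
-/

open Finset

noncomputable def Xhat (C : Fin 9 → Fin 9 → Fin 9 → ℝ) (i : Fin 9)
    (F : (Fin 9 → ℝ) → ℝ) : (Fin 9 → ℝ) → ℝ :=
  fun x => ∑ j : Fin 9, (∑ k : Fin 9, C i j k * x k) * fderiv ℝ F x (Pi.single j 1)

noncomputable def Lhalf (p q : ℝ) : Fin 9 → Fin 9 → Fin 9 → ℝ := fun i j k =>
  if (i, j, k) = ((0 : Fin 9), (1 : Fin 9), (1 : Fin 9)) then (2 : ℝ) else
  if (i, j, k) = ((0 : Fin 9), (2 : Fin 9), (2 : Fin 9)) then (-2 : ℝ) else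
  if (i, j, k) = ((1 : Fin 9), (2 : Fin 9), (0 : Fin 9)) then (1 : ℝ) else
  if (i, j, k) = ((0 : Fin 9), (3 : Fin 9), (3 : Fin 9)) then (1 : ℝ) else
  if (i, j, k) = ((0 : Fin 9), (4 : Fin 9), (4 : Fin 9)) then (-1 : ℝ) else
  if (i, j, k) = ((1 : Fin 9), (4 : Fin 9), (3 : Fin 9)) then (1 : ℝ) else
  if (i, j, k) = ((2 : Fin 9), (3 : Fin 9), (4 : Fin 9)) then (1 : ℝ) else
  if (i, j, k) = ((3 : Fin 9), (7 : Fin 9), (3 : Fin 9)) then (p : ℝ) else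
  if (i, j, k) = ((3 : Fin 9), (8 : Fin 9), (3 : Fin 9)) then (q : ℝ) else
  if (i, j, k) = ((4 : Fin 9), (7 : Fin 9), (4 : Fin 9)) then (p : ℝ) else
  if (i, j, k) = ((4 : Fin 9), (8 : Fin 9), (4 : Fin 9)) then (q : ℝ) else
  if (i, j, k) = ((5 : Fin 9), (7 : Fin 9), (5 : Fin 9)) then (1 : ℝ) else
  if (i, j, k) = ((6 : Fin 9), (8 : Fin 9), (6 : Fin 9)) then (1 : ℝ) else
  0

noncomputable def C (p q : ℝ) (i j k : Fin 9) : ℝ := Lhalf p q i j k - Lhalf p q j i k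

noncomputable def J₁ : (Fin 9 → ℝ) → ℝ :=
  fun x => -(x 1) * (x 4)^2 - x 0 * x 3 * x 4 + x 2 * (x 3)^2

noncomputable def I₁ (p q : ℝ) : (Fin 9 → ℝ) → ℝ :=
  fun x => J₁ x / (Real.rpow (x 5) (2 * p) * Real.rpow (x 6) (2 * q))

theorem fderiv_div_apply_eq_zero_of_eq_mul {𝕜 E : Type*} [NontriviallyNormedField 𝕜]
    [NormedAddCommGroup E] [NormedSpace 𝕜 E] {N D : E → 𝕜} {x v : E} (c : 𝕜)
    (hN : DifferentiableAt 𝕜 N x) (hD : DifferentiableAt 𝕜 D x) (hx : D x ≠ 0)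
    (hNv : fderiv 𝕜 N x v = c * N x) (hDv : fderiv 𝕜 D x v = c * D x) :
    fderiv 𝕜 (fun y => N y / D y) x v = 0 := by
  have h : HasFDerivAt (fun y => N y * (D y)⁻¹) _ x :=
    hN.hasFDerivAt.mul ((hasDerivAt_inv hx).comp_hasFDerivAt x hD.hasFDerivAt)
  simp only [div_eq_mul_inv, h.fderiv]
  simp only [add_apply, smul_apply, smul_eq_mul, hNv, hDv]
  field_simp
  ring

theorem fderiv_rpow_mul_rpow_apply {ι : Type*} [Fintype ι] (j k : ι) (a b : ℝ)
    {x : ι → ℝ} (hj : x j ≠ 0) (hk : x k ≠ 0) (v : ι → ℝ) :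
    fderiv ℝ (fun y => y j ^ a * y k ^ b) x v
      = (a * v j / x j + b * v k / x k) * (x j ^ a * x k ^ b) := by
  have h : HasFDerivAt (fun y : ι → ℝ => y j ^ a * y k ^ b) _ x :=
    ((hasFDerivAt_apply (𝕜 := ℝ) j x).rpow_const (p := a) (Or.inl hj)).mul
      ((hasFDerivAt_apply (𝕜 := ℝ) k x).rpow_const (p := b) (Or.inl hk))
  rw [h.fderiv]
  simp only [Real.rpow_sub_one hj, Real.rpow_sub_one hk, add_apply,
    smul_apply, ContinuousLinearMap.proj_apply, smul_eq_mul]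
  ring

noncomputable def XhatField (C : Fin 9 → Fin 9 → Fin 9 → ℝ) (i : Fin 9) (x : Fin 9 → ℝ) :
    Fin 9 → ℝ :=
  fun j => ∑ k, C i j k * x k

theorem Xhat_eq_fderiv_XhatField (C : Fin 9 → Fin 9 → Fin 9 → ℝ) (i : Fin 9)
    (F : (Fin 9 → ℝ) → ℝ) (x : Fin 9 → ℝ) :
    Xhat C i F x = fderiv ℝ F x (XhatField C i x) := by
  conv_rhs => rw [pi_eq_sum_univ' (XhatField C i x)]
  simp [Xhat, XhatField, map_sum, map_smul]

theorem fderiv_J₁_apply (x v : Fin 9 → ℝ) :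
    fderiv ℝ J₁ x v = -(v 1) * x 4 ^ 2 - 2 * x 1 * x 4 * v 4 - v 0 * x 3 * x 4
      - x 0 * v 3 * x 4 - x 0 * x 3 * v 4 + v 2 * x 3 ^ 2 + 2 * x 2 * x 3 * v 3 := by
  have hx (j : Fin 9) := hasFDerivAt_apply (𝕜 := ℝ) (F' := fun _ => ℝ) j x
  have h : HasFDerivAt J₁ _ x := (((hx 1).neg.mul ((hx 4).pow 2)).sub
    (((hx 0).mul (hx 3)).mul (hx 4))).add ((hx 2).mul ((hx 3).pow 2))
  rw [h.fderiv]
  simp only [Pi.neg_apply, Pi.mul_apply, nsmul_eq_mul, add_apply,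
    sub_apply, neg_apply, smul_apply,
    ContinuousLinearMap.proj_apply, smul_eq_mul]
  ring

noncomputable def multiplier (p q : ℝ) : Fin 9 → ℝ := ![0, 0, 0, 0, 0, 0, 0, -2 * p, -2 * q]

theorem fderiv_J₁_XhatField (p q : ℝ) (i : Fin 9) (x : Fin 9 → ℝ) :
    fderiv ℝ J₁ x (XhatField (C p q) i x) = multiplier p q i * J₁ x := by
  rw [fderiv_J₁_apply]
  fin_cases i <;> simp [XhatField, C, Lhalf, multiplier, J₁] <;> ring

theorem fderiv_rpow_mul_rpow_XhatField (p q : ℝ) (i : Fin 9) {x : Fin 9 → ℝ}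
    (h5 : x 5 ≠ 0) (h6 : x 6 ≠ 0) :
    fderiv ℝ (fun y => y 5 ^ (2 * p) * y 6 ^ (2 * q)) x (XhatField (C p q) i x)
      = multiplier p q i * (x 5 ^ (2 * p) * x 6 ^ (2 * q)) := by
  rw [fderiv_rpow_mul_rpow_apply 5 6 _ _ h5 h6]
  congr 1
  fin_cases i <;> simp [XhatField, C, Lhalf, multiplier] <;> field_simp

theorem invariant_L9_28_general (p q : ℝ) :
    ∀ (i : Fin 9) (x : Fin 9 → ℝ), 0 < x 5 → 0 < x 6 → 0 < J₁ x →
      Xhat (C p q) i (I₁ p q) x = 0 := by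
  intro i x h5 h6 _
  have hI : I₁ p q = fun y => J₁ y / (y 5 ^ (2 * p) * y 6 ^ (2 * q)) := rfl
  rw [Xhat_eq_fderiv_XhatField, hI]
  refine fderiv_div_apply_eq_zero_of_eq_mul (multiplier p q i) ?_ ?_ (by positivity)
    (fderiv_J₁_XhatField p q i x) (fderiv_rpow_mul_rpow_XhatField p q i h5.ne' h6.ne')
  · unfold J₁
    fun_prop
  · fun_prop (disch := positivity)

theorem invariant_L9_28 (p q : ℝ) (hp : p ≠ 0) (hq : q ≠ 0) :
    ∀ (i : Fin 9) (x : Fin 9 → ℝ), 0 < x 5 → 0 < x 6 → 0 < J₁ x →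
      Xhat (C p q) i (I₁ p q) x = 0 :=
  invariant_L9_28_general p q
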